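/- arXiv:math/0102230 — 7 statements merged into one kernel-verified Lean document; each statement's English description precedes it below -/
import Mathlib

section
/- Let κ be a finite measure and λ a probability measure on a σ-field 𝒢, and let 𝒢ₙ be an increasing sequence of sub-σ-fields whose union generates 𝒢. Suppose that for each n, the restriction of κ to 𝒢ₙ is absolutely continuous with respect to the restriction of λ to 𝒢ₙ, with Radon–Nikodým derivative Xₙ. Set X := limsup_{n→∞} Xₙ. Then κ is absolutely continuous with respect to λ if and only if X < ∞ κ-almost everywhere. -/
/-!
Put `ρ = κ + λ`. On `𝒢ₙ` the density of `λ` with respect to `ρ` is `(Xₙ + 1)⁻¹`. These densities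
are the conditional expectations of `dλ/dρ` given `𝒢ₙ`, so by Lévy's upward theorem they converge
`ρ`-a.e. to `dλ/dρ`, which is therefore `(limsup Xₙ + 1)⁻¹`. Finally `κ ≪ λ` exactly when
`dλ/dρ > 0` holds `κ`-a.e., i.e. when `limsup Xₙ < ∞` holds `κ`-a.e.
-/

open MeasureTheory Filter
open scoped ENNReal Topology

lemma ENNReal.inv_limsup_add_one_eq_of_tendsto {a : ℕ → ℝ≥0∞} {r : ℝ≥0∞}
    (h : Tendsto (fun n ↦ (a n + 1)⁻¹) atTop (𝓝 r)) : (limsup a atTop + 1)⁻¹ = r := by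
  have hanti : Antitone fun x : ℝ≥0∞ ↦ (x + 1)⁻¹ :=
    fun x y hxy ↦ ENNReal.inv_le_inv.2 (add_le_add_left hxy 1)
  have hcont : Continuous fun x : ℝ≥0∞ ↦ (x + 1)⁻¹ := (continuous_add_const 1).inv
  rw [hanti.map_limsup_of_continuousAt a hcont.continuousAt]
  exact h.liminf_eq

namespace MeasureTheory

variable {Ω : Type*} {m m₀ : MeasurableSpace Ω}

lemma Measure.absolutelyContinuous_iff_ae_rnDeriv_pos {κ ν ρ : Measure Ω}
    [ν.HaveLebesgueDecomposition ρ] (hκ : κ ≪ ρ) (hν : ν ≪ ρ) :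
    κ ≪ ν ↔ ∀ᵐ x ∂κ, 0 < ν.rnDeriv ρ x := by
  refine ⟨fun h ↦ h.ae_le (Measure.rnDeriv_pos hν), fun hpos ↦ ?_⟩
  refine Measure.AbsolutelyContinuous.mk fun s hs hνs ↦ ?_
  have hzero : ∀ᵐ x ∂ρ.restrict s, ν.rnDeriv ρ x = 0 := by
    rwa [← Measure.withDensity_rnDeriv_eq ν ρ hν, withDensity_apply _ hs,
      lintegral_eq_zero_iff (Measure.measurable_rnDeriv ν ρ)] at hνs
  have hfalse : ∀ᵐ x ∂κ.restrict s, False := by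
    filter_upwards [(hκ.restrict s).ae_le hzero, ae_restrict_of_ae hpos] with x h0 hx
    exact hx.ne' h0
  simpa using hfalse

lemma ae_tendsto_rnDeriv_trim {μ ν : Measure Ω} [IsFiniteMeasure μ] [IsFiniteMeasure ν]
    (hνμ : ν ≪ μ) (ℱ : Filtration ℕ m₀) (hℱ : ⨆ n, ℱ n = m₀) :
    ∀ᵐ x ∂μ, Tendsto (fun n ↦ (ν.trim (ℱ.le n)).rnDeriv (μ.trim (ℱ.le n)) x) atTop
      (𝓝 (ν.rnDeriv μ x)) := by
  set g : Ω → ℝ := fun x ↦ (ν.rnDeriv μ x).toReal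
  have hlevy := tendsto_ae_condExp (μ := μ) (ℱ := ℱ) g
  rw [hℱ, condExp_of_stronglyMeasurable le_rfl (by fun_prop) Measure.integrable_toReal_rnDeriv]
    at hlevy
  have hcond : ∀ n, (fun x ↦ ((ν.trim (ℱ.le n)).rnDeriv (μ.trim (ℱ.le n)) x).toReal)
      =ᵐ[μ] μ[g | ℱ n] :=
    fun n ↦ ae_eq_of_ae_eq_trim (toReal_rnDeriv_trim (ℱ.le n) hνμ)
  have hfin : ∀ n, ∀ᵐ x ∂μ, (ν.trim (ℱ.le n)).rnDeriv (μ.trim (ℱ.le n)) x ≠ ∞ :=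
    fun n ↦ ae_of_ae_trim (ℱ.le n) (Measure.rnDeriv_ne_top _ _)
  filter_upwards [hlevy, ae_all_iff.2 hcond, ae_all_iff.2 hfin, Measure.rnDeriv_ne_top ν μ]
    with x hx hxc hxf hne
  rw [← ENNReal.ofReal_toReal hne]
  refine (ENNReal.tendsto_ofReal hx).congr fun n ↦ ?_
  rw [← hxc n, ENNReal.ofReal_toReal (hxf n)]

lemma trim_eq_withDensity_of_forall_setLIntegral {μ ν : Measure Ω} (hm : m ≤ m₀)
    {f : Ω → ℝ≥0∞} (hf : Measurable[m] f)
    (h : ∀ s, MeasurableSet[m] s → ν s = ∫⁻ x in s, f x ∂μ) :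
    ν.trim hm = (μ.trim hm).withDensity f := by
  refine @Measure.ext _ m _ _ fun s hs ↦ ?_
  rw [withDensity_apply _ hs, restrict_trim hm μ hs, lintegral_trim hm hf,
    trim_measurableSet_eq hm hs, h s hs]

lemma rnDeriv_trim_add_ae_eq {μ ν : Measure Ω} [IsFiniteMeasure μ] [IsFiniteMeasure ν]
    (hm : m ≤ m₀) {f : Ω → ℝ≥0∞} (hf : Measurable[m] f)
    (h : ∀ s, MeasurableSet[m] s → ν s = ∫⁻ x in s, f x ∂μ) :
    (μ.trim hm).rnDeriv ((ν + μ).trim hm) =ᵐ[ν + μ] fun x ↦ (f x + 1)⁻¹ := by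
  have hνf := trim_eq_withDensity_of_forall_setLIntegral hm hf h
  have hdom : ν.trim hm + μ.trim hm ≪ μ.trim hm :=
    Measure.AbsolutelyContinuous.add_left_iff.2
      ⟨hνf ▸ withDensity_absolutelyContinuous _ _, .rfl⟩
  refine ae_eq_of_ae_eq_trim (hm := hm) ?_
  rw [trim_add]
  filter_upwards [hdom.ae_le ((μ.trim hm).rnDeriv_add_self (ν.trim hm)),
    hdom.ae_le (hνf ▸ Measure.rnDeriv_withDensity (μ.trim hm) hf)] with x h1 h2
  rw [h1, h2]

end MeasureTheory

/-- **Radon–Nikodým dichotomy, absolute continuity part.**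
Let `κ` be a finite measure and `λ` a probability measure on a σ-field `m`,
let `𝒢 n` be an increasing sequence of sub-σ-fields whose union generates `m`,
and let `X n` be a `𝒢 n`-measurable version of the Radon–Nikodým derivative of
`κ` restricted to `𝒢 n` with respect to `λ` restricted to `𝒢 n`.
Then `κ ≪ λ` iff `limsup X n < ∞` κ-a.e. -/
theorem rn_dichotomy_abs_continuous {Ω : Type*} {m : MeasurableSpace Ω}
    (κ lam : Measure Ω) [IsFiniteMeasure κ] [IsProbabilityMeasure lam]
    (𝒢 : ℕ → MeasurableSpace Ω) (hmono : Monotone 𝒢) (hle : ∀ n, 𝒢 n ≤ m)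
    (hgen : (⨆ n, 𝒢 n) = m)
    (X : ℕ → Ω → ℝ≥0∞) (hXmeas : ∀ n, Measurable[𝒢 n] (X n))
    (hXrn : ∀ n s, MeasurableSet[𝒢 n] s → κ s = ∫⁻ x in s, X n x ∂lam) :
    κ ≪ lam ↔ (∀ᵐ x ∂κ, limsup (fun n => X n x) atTop < ⊤) := by
  have hκ : κ ≪ κ + lam := Measure.AbsolutelyContinuous.rfl.add_right lam
  have hlam : lam ≪ κ + lam := Measure.AbsolutelyContinuous.rfl.add_right' κ
  have hdens : ∀ n, (lam.trim (hle n)).rnDeriv ((κ + lam).trim (hle n))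
      =ᵐ[κ + lam] fun x ↦ (X n x + 1)⁻¹ :=
    fun n ↦ rnDeriv_trim_add_ae_eq (hle n) (hXmeas n) (hXrn n)
  have hlim : ∀ᵐ x ∂κ + lam,
      (limsup (fun n ↦ X n x) atTop + 1)⁻¹ = lam.rnDeriv (κ + lam) x := by
    filter_upwards [ae_tendsto_rnDeriv_trim hlam ⟨𝒢, hmono, hle⟩ hgen, ae_all_iff.2 hdens]
      with x hx hxn
    exact ENNReal.inv_limsup_add_one_eq_of_tendsto (hx.congr hxn)
  rw [Measure.absolutelyContinuous_iff_ae_rnDeriv_pos hκ hlam]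
  refine eventually_congr ?_
  filter_upwards [hκ.ae_le hlim] with x hx
  simp [← hx, lt_top_iff_ne_top]
end

section
/- Let κ be a finite measure and λ a probability measure on a σ-field 𝒢, and let 𝒢ₙ be an increasing sequence of sub-σ-fields whose union generates 𝒢. Suppose that for each n, the restriction of κ to 𝒢ₙ is absolutely continuous with respect to the restriction of λ to 𝒢ₙ, with Radon–Nikodým derivative Xₙ. Set X := limsup_{n→∞} Xₙ. Then κ is mutually singular with λ if and only if X = ∞ κ-almost everywhere. -/
/-!
Put `ρ = κ + λ` and `f = dκ/dρ`. On `𝒢ₙ` the density of `κ` with respect to `ρ` is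
`Xₙ / (Xₙ + 1)`, which is therefore the conditional expectation `ρ[f | 𝒢ₙ]`; by Lévy's upward
theorem `Xₙ / (Xₙ + 1) → f` `ρ`-a.e. Since `dκ/d(κ + λ) = (dλ/dκ + 1)⁻¹` `κ`-a.e., `κ ⟂ λ` iff
`f = 1` `κ`-a.e., and the limit of `Xₙ / (Xₙ + 1)` is `1` exactly when `limsup Xₙ = ∞`.
-/

open MeasureTheory Filter
open scoped ENNReal Topology

namespace ENNReal

lemma one_sub_inv_add_one_eq_div {y : ℝ≥0∞} (hy : y ≠ ∞) : 1 - (y + 1)⁻¹ = y / (y + 1) := by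
  refine ENNReal.sub_eq_of_eq_add (by simp) ?_
  rw [div_eq_mul_inv, ← add_one_mul, ENNReal.mul_inv_cancel (by simp) (by simp [hy])]

lemma one_sub_inv_add_one_eq_one_iff {y : ℝ≥0∞} : 1 - (y + 1)⁻¹ = 1 ↔ y = ∞ := by
  refine ⟨fun h => ?_, fun h => by simp [h]⟩
  by_contra hy
  refine (ENNReal.sub_lt_self one_ne_top one_ne_zero ?_).ne h
  simp [hy]

lemma div_add_one_ne_top (y : ℝ≥0∞) : y / (y + 1) ≠ ∞ :=
  ((ENNReal.div_le_of_le_mul (by rw [one_mul]; exact le_self_add)).trans_lt one_lt_top).ne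

lemma limsup_eq_top_iff_of_tendsto_div_add_one {ι : Type*} {F : Filter ι} [F.NeBot]
    {a : ι → ℝ≥0∞} {c : ℝ≥0∞} (ha : ∀ i, a i ≠ ∞)
    (h : Tendsto (fun i => a i / (a i + 1)) F (𝓝 c)) :
    limsup a F = ∞ ↔ c = 1 := by
  -- not `y / (y + 1)`, which is `∞ / ∞ = 0` at `y = ∞`
  set φ : ℝ≥0∞ → ℝ≥0∞ := fun y => 1 - (y + 1)⁻¹
  have hφ_mono : Monotone φ := fun y z hyz => by dsimp only [φ]; gcongr
  have hφ_cont : Continuous φ :=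
    (ENNReal.continuous_sub_left one_ne_top).comp (continuous_add_const 1).inv
  have hφ_lim : φ (limsup a F) = c := by
    rw [hφ_mono.map_limsup_of_continuousAt a hφ_cont.continuousAt]
    refine (h.congr fun i => ?_).limsup_eq
    exact (one_sub_inv_add_one_eq_div (ha i)).symm
  rw [← hφ_lim, one_sub_inv_add_one_eq_one_iff]

end ENNReal

namespace MeasureTheory.Measure

variable {Ω : Type*} {m₀ : MeasurableSpace Ω} {μ ν : Measure Ω} {m : MeasurableSpace Ω}
  {X : Ω → ℝ≥0∞}

lemma mutuallySingular_iff_rnDeriv_add_eq_one [SigmaFinite μ] [SigmaFinite ν] :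
    μ ⟂ₘ ν ↔ μ.rnDeriv (μ + ν) =ᵐ[μ] 1 := by
  rw [MutuallySingular.comm, ← rnDeriv_eq_zero, add_comm]
  refine eventually_congr ((rnDeriv_add_self μ ν).mono fun x hx => ?_)
  simp [hx]

lemma trim_eq_withDensity_of_setLIntegral_eq (hm : m ≤ m₀) (hX : Measurable[m] X)
    (h : ∀ s, MeasurableSet[m] s → μ s = ∫⁻ x in s, X x ∂ν) :
    μ.trim hm = (ν.trim hm).withDensity X := by
  ext s hs
  rw [trim_measurableSet_eq hm hs, withDensity_apply _ hs, setLIntegral_trim hm hX hs, h s hs]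

lemma trim_add (hm : m ≤ m₀) : (μ + ν).trim hm = μ.trim hm + ν.trim hm := by
  ext s hs
  simp [trim_measurableSet_eq hm hs]

lemma ae_ne_top_of_trim_eq_withDensity (hm : m ≤ m₀) [SigmaFinite (μ.trim hm)]
    [SigmaFinite (ν.trim hm)] (hX : Measurable[m] X) (h : μ.trim hm = (ν.trim hm).withDensity X) :
    ∀ᵐ x ∂μ, X x ≠ ∞ := by
  have hac : μ.trim hm ≪ ν.trim hm := h ▸ withDensity_absolutelyContinuous _ _
  have hX_eq : (μ.trim hm).rnDeriv (ν.trim hm) =ᵐ[ν.trim hm] X :=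
    h ▸ rnDeriv_withDensity (ν.trim hm) hX
  refine ae_of_ae_trim hm (hac.ae_le ?_)
  filter_upwards [hX_eq, (μ.trim hm).rnDeriv_ne_top (ν.trim hm)] with x hX_eq hne_top
  rwa [← hX_eq]

lemma rnDeriv_trim_add_eq_div_add_one (hm : m ≤ m₀) [IsFiniteMeasure μ] [IsFiniteMeasure ν]
    (hX : Measurable[m] X) (h : μ.trim hm = (ν.trim hm).withDensity X) :
    (μ.trim hm).rnDeriv ((μ + ν).trim hm) =ᵐ[(μ + ν).trim hm] fun x => X x / (X x + 1) := by
  have hac : μ.trim hm ≪ ν.trim hm := h ▸ withDensity_absolutelyContinuous _ _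
  have hX_eq : (μ.trim hm).rnDeriv (ν.trim hm) =ᵐ[ν.trim hm] X :=
    h ▸ rnDeriv_withDensity (ν.trim hm) hX
  have hν : ∀ᵐ x ∂ν.trim hm,
      (μ.trim hm).rnDeriv (μ.trim hm + ν.trim hm) x = X x / (X x + 1) := by
    filter_upwards [rnDeriv_self_add (μ.trim hm) (ν.trim hm), hX_eq] with x hself_add hX_eq
    rw [hself_add, hX_eq]
  rw [trim_add]
  exact ae_add_measure_iff.2 ⟨hac.ae_le hν, hν⟩

lemma toReal_div_add_one_ae_eq_condExp (hm : m ≤ m₀) [IsFiniteMeasure μ] [IsFiniteMeasure ν]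
    (hX : Measurable[m] X) (h : μ.trim hm = (ν.trim hm).withDensity X) :
    (fun x => (X x / (X x + 1)).toReal)
      =ᵐ[μ + ν] (μ + ν)[fun x => (μ.rnDeriv (μ + ν) x).toReal | m] := by
  refine ae_eq_of_ae_eq_trim (hm := hm) ?_
  filter_upwards [toReal_rnDeriv_trim hm (rfl.absolutelyContinuous.add_right ν),
    rnDeriv_trim_add_eq_div_add_one hm hX h] with x hcondExp hrnDeriv
  rw [← hcondExp, hrnDeriv]

lemma ae_tendsto_div_add_one_rnDeriv_add [IsFiniteMeasure μ] [IsFiniteMeasure ν]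
    (𝒢 : Filtration ℕ m₀) (hgen : ⨆ n, 𝒢 n = m₀) {X : ℕ → Ω → ℝ≥0∞}
    (hX : ∀ n, Measurable[𝒢 n] (X n))
    (h : ∀ n, μ.trim (𝒢.le n) = (ν.trim (𝒢.le n)).withDensity (X n)) :
    ∀ᵐ x ∂(μ + ν), Tendsto (fun n => X n x / (X n x + 1)) atTop (𝓝 (μ.rnDeriv (μ + ν) x)) := by
  have hlevy := (integrable_toReal_rnDeriv (μ := μ) (ν := μ + ν)).tendsto_ae_condExp (ℱ := 𝒢)
    (by rw [hgen]; exact (measurable_rnDeriv μ (μ + ν)).ennreal_toReal.stronglyMeasurable)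
  have hratio := fun n => toReal_div_add_one_ae_eq_condExp (𝒢.le n) (hX n) (h n)
  filter_upwards [hlevy, ae_all_iff.2 hratio, μ.rnDeriv_ne_top (μ + ν)]
    with x hlim hcondExp hne_top
  rw [← ENNReal.tendsto_toReal_iff (fun n => ENNReal.div_add_one_ne_top _) hne_top]
  exact hlim.congr fun n => (hcondExp n).symm

end MeasureTheory.Measure

/-- **Radon–Nikodým dichotomy, mutual singularity part.**
Let `κ` be a finite measure and `λ` a probability measure on a σ-field `m`,
let `𝒢 n` be an increasing sequence of sub-σ-fields whose union generates `m`,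
and let `X n` be a `𝒢 n`-measurable version of the Radon–Nikodým derivative of
`κ` restricted to `𝒢 n` with respect to `λ` restricted to `𝒢 n`.
Then `κ ⟂ λ` iff `limsup X n = ∞` κ-a.e. -/
theorem rn_dichotomy_singular {Ω : Type*} {m : MeasurableSpace Ω}
    (κ lam : Measure Ω) [IsFiniteMeasure κ] [IsProbabilityMeasure lam]
    (𝒢 : ℕ → MeasurableSpace Ω) (hmono : Monotone 𝒢) (hle : ∀ n, 𝒢 n ≤ m)
    (hgen : (⨆ n, 𝒢 n) = m)
    (X : ℕ → Ω → ℝ≥0∞) (hXmeas : ∀ n, Measurable[𝒢 n] (X n))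
    (hXrn : ∀ n s, MeasurableSet[𝒢 n] s → κ s = ∫⁻ x in s, X n x ∂lam) :
    κ ⟂ₘ lam ↔ (∀ᵐ x ∂κ, limsup (fun n => X n x) atTop = ⊤) := by
  have htrim n : κ.trim (hle n) = (lam.trim (hle n)).withDensity (X n) :=
    Measure.trim_eq_withDensity_of_setLIntegral_eq (hle n) (hXmeas n) (hXrn n)
  have hconv : ∀ᵐ x ∂κ,
      Tendsto (fun n => X n x / (X n x + 1)) atTop (𝓝 (κ.rnDeriv (κ + lam) x)) :=
    (rfl.absolutelyContinuous.add_right lam).ae_le <|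
      Measure.ae_tendsto_div_add_one_rnDeriv_add ⟨𝒢, hmono, hle⟩ hgen hXmeas htrim
  have hfin : ∀ᵐ x ∂κ, ∀ n, X n x ≠ ∞ :=
    ae_all_iff.2 fun n => Measure.ae_ne_top_of_trim_eq_withDensity (hle n) (hXmeas n) (htrim n)
  rw [Measure.mutuallySingular_iff_rnDeriv_add_eq_one, EventuallyEq, eventually_congr]
  filter_upwards [hconv, hfin] with x hx_conv hx_fin
  exact (ENNReal.limsup_eq_top_iff_of_tendsto_div_add_one hx_fin hx_conv).symm
end

section
/- Let T be a spherically symmetric infinite rooted tree, i.e., all vertices at distance k from the root have the same number of children, and let |Tₘ| denote the number of vertices at distance m from the root. Then simple random walk on T is transient if and only if Σ_m 1/|Tₘ| < ∞. -/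
open Finset

/-! A spherically symmetric infinite rooted tree is determined by the sequence
`a : ℕ → ℕ`, where every vertex at distance `k` from the root has `a k`
children (so each level is nonempty when `∀ k, 1 ≤ a k`).  The number of
vertices at level `m` is `|T_m| = ∏_{k < m} a k`.

Simple random walk on such a tree projects to the Markov chain of the distance
from the root: from level `0` it moves to level `1` with probability `1`, and
from level `k ≥ 1` it moves up to level `k+1` with probability
`a k / (a k + 1)` and down to level `k-1` with probability `1 / (a k + 1)`
(a vertex at level `k ≥ 1` has degree `a k + 1`).  All quantities relevant to
transience depend only on this level chain. -/

/-- Probability that simple random walk at a vertex of level `k` steps away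
from the root. -/
noncomputable def upProb (a : ℕ → ℕ) : ℕ → ℝ
  | 0 => 1
  | (k+1) => (a (k+1) : ℝ) / ((a (k+1) : ℝ) + 1)

/-- Probability that simple random walk at a vertex of level `k` steps toward
the root. -/
noncomputable def downProb (a : ℕ → ℕ) : ℕ → ℝ
  | 0 => 0
  | (k+1) => 1 / ((a (k+1) : ℝ) + 1)

/-- `levelDist a n j` is the probability that the simple random walk on the
spherically symmetric tree with child counts `a`, started at the root, is at
level `j` at time `n`. -/
noncomputable def levelDist (a : ℕ → ℕ) : ℕ → ℕ → ℝ
  | 0, j => if j = 0 then 1 else 0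
  | (n+1), j =>
      (if j = 0 then 0 else levelDist a n (j-1) * upProb a (j-1)) +
        levelDist a n (j+1) * downProb a (j+1)

/-! Think of the tree as an electrical network: the `|T_{j+1}|` unit edges between levels `j`
and `j + 1` are in parallel, so the level chain is the walk on a path whose `j`-th edge has
resistance proportional to `r_j = ∏_{k < j} 1 / a (k+1) = a 0 / |T_{j+1}|`.
Write `u_j`, `d_j` for `upProb a j`, `downProb a j`, and `S_N(j) = visits a N j` for the
expected number of visits to level `j` before time `N`. The expected net number of crossings
of the `j`-th edge before time `N` is `S_N(j) u_j - S_N(j+1) d_{j+1} = P(X_N > j)`, and since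
`d_{j+1} r_j = u_{j+1} r_{j+1}`, the "voltages" `S_N(j) u_j r_j` telescope (Ohm's law):
`S_N(0) = ∑_{j<M} P(X_N > j) r_j + S_N(M) u_M r_M`. Taking `M = N` bounds `S_N(0)` by
`∑_{j<N} r_j`; conversely, if the root is visited finitely often then so is every level, hence
`P(X_N > j) → 1` and `∑_{j<M} r_j ≤ S_∞(0)` for every `M`. -/

open Filter Topology

noncomputable def visits (a : ℕ → ℕ) (N j : ℕ) : ℝ :=
  ∑ n ∈ range N, levelDist a n j

noncomputable def resistance (a : ℕ → ℕ) (j : ℕ) : ℝ :=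
  ∏ k ∈ range j, (a (k+1) : ℝ)⁻¹

section LevelChain

variable (a : ℕ → ℕ)

lemma upProb_add_downProb (j : ℕ) : upProb a j + downProb a j = 1 := by
  cases j with
  | zero => norm_num [upProb, downProb]
  | succ k =>
    simp only [upProb, downProb]
    field_simp

lemma upProb_nonneg (j : ℕ) : 0 ≤ upProb a j := by
  cases j with
  | zero => norm_num [upProb]
  | succ k => simp only [upProb]; positivity

lemma upProb_le_one (j : ℕ) : upProb a j ≤ 1 := by
  cases j with
  | zero => simp [upProb]
  | succ k => simp only [upProb]; rw [div_le_one (by positivity)]; linarith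

lemma downProb_succ_pos (j : ℕ) : 0 < downProb a (j+1) := by
  simp only [downProb]; positivity

lemma levelDist_succ_zero (n : ℕ) :
    levelDist a (n+1) 0 = levelDist a n 1 * downProb a 1 := by
  simp [levelDist]

lemma levelDist_succ_succ (n j : ℕ) : levelDist a (n+1) (j+1) =
    levelDist a n j * upProb a j + levelDist a n (j+2) * downProb a (j+2) := by
  simp [levelDist]

lemma levelDist_nonneg (n j : ℕ) : 0 ≤ levelDist a n j := by
  induction n generalizing j with
  | zero => simp only [levelDist]; split_ifs <;> norm_num
  | succ n ih =>
    cases j with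
    | zero => rw [levelDist_succ_zero]; exact mul_nonneg (ih 1) (downProb_succ_pos a 0).le
    | succ j =>
      rw [levelDist_succ_succ]
      exact add_nonneg (mul_nonneg (ih j) (upProb_nonneg a j))
        (mul_nonneg (ih (j+2)) (downProb_succ_pos a _).le)

lemma levelDist_eq_zero_of_lt {n j : ℕ} (h : n < j) : levelDist a n j = 0 := by
  induction n generalizing j with
  | zero => simp [levelDist, h.ne']
  | succ n ih =>
    obtain ⟨j, rfl⟩ : ∃ i, j = i + 1 := ⟨j - 1, by omega⟩
    rw [levelDist_succ_succ, ih (by omega), ih (by omega)]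
    ring

lemma visits_nonneg (N j : ℕ) : 0 ≤ visits a N j :=
  sum_nonneg fun n _ => levelDist_nonneg a n j

lemma visits_eq_zero_of_le {N j : ℕ} (h : N ≤ j) : visits a N j = 0 :=
  sum_eq_zero fun n hn => levelDist_eq_zero_of_lt a (by rw [mem_range] at hn; omega)

lemma visits_succ (N j : ℕ) : visits a (N+1) j = visits a N j + levelDist a N j :=
  sum_range_succ _ _

lemma visits_succ_zero (N : ℕ) : visits a (N+1) 0 = 1 + visits a N 1 * downProb a 1 := by
  simp only [visits, sum_range_succ', levelDist_succ_zero, ← sum_mul]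
  simp [levelDist, add_comm]

lemma visits_succ_succ (N j : ℕ) : visits a (N+1) (j+1) =
    visits a N j * upProb a j + visits a N (j+2) * downProb a (j+2) := by
  simp only [visits, sum_range_succ', levelDist_succ_succ, sum_add_distrib, ← sum_mul]
  simp [levelDist]

lemma visits_flux_eq (N j : ℕ) :
    visits a N j * upProb a j - visits a N (j+1) * downProb a (j+1) =
      1 - ∑ i ∈ range (j+1), levelDist a N i := by
  induction j with
  | zero =>
    have h := visits_succ_zero a N
    rw [visits_succ] at h
    simp only [upProb, zero_add, range_one, sum_singleton]
    linarith
  | succ j ih =>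
    have h := visits_succ_succ a N j
    rw [visits_succ] at h
    have hud := upProb_add_downProb a (j+1)
    rw [sum_range_succ]
    linear_combination ih + h + visits a N (j+1) * hud

lemma sum_levelDist_le_one (N j : ℕ) : ∑ i ∈ range j, levelDist a N i ≤ 1 := by
  -- total mass: the flux across an edge the walk cannot have reached by time `N` vanishes
  have hmass : ∑ i ∈ range (N + j + 1), levelDist a N i = 1 := by
    have h := visits_flux_eq a N (N + j)
    rw [visits_eq_zero_of_le a (by omega), visits_eq_zero_of_le a (by omega)] at h
    linarith
  rw [← hmass]
  exact sum_le_sum_of_subset_of_nonneg (range_subset_range.2 (by omega))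
    fun i _ _ => levelDist_nonneg a N i

lemma summable_levelDist (h0 : Summable (fun n => levelDist a n 0)) (j : ℕ) :
    Summable (fun n => levelDist a n j) := by
  induction j with
  | zero => exact h0
  | succ j ih =>
    refine summable_of_sum_range_le (c := (∑' n, levelDist a n j) / downProb a (j+1))
      (levelDist_nonneg a · _) fun N => ?_
    -- the net flux `S_N(j) u_j - S_N(j+1) d_{j+1}` is nonnegative
    have hflux := visits_flux_eq a N j
    have hprob := sum_levelDist_le_one a N (j+1)
    have hu := mul_le_of_le_one_right (visits_nonneg a N j) (upProb_le_one a j)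
    have hS : visits a N j ≤ ∑' n, levelDist a n j :=
      ih.sum_le_tsum _ fun n _ => levelDist_nonneg a n j
    rw [le_div_iff₀ (downProb_succ_pos a j)]
    change visits a N (j+1) * _ ≤ _
    linarith

end LevelChain

section Resistance

variable {a : ℕ → ℕ}

lemma resistance_pos (ha : ∀ k, 1 ≤ a k) (j : ℕ) : 0 < resistance a j :=
  prod_pos fun k _ => inv_pos.2 (Nat.cast_pos.2 (ha (k+1)))

lemma downProb_mul_resistance (ha : ∀ k, 1 ≤ a k) (j : ℕ) :
    downProb a (j+1) * resistance a j = upProb a (j+1) * resistance a (j+1) := by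
  have : (a (j+1) : ℝ) ≠ 0 := Nat.cast_ne_zero.2 (Nat.one_le_iff_ne_zero.1 (ha (j+1)))
  simp only [downProb, upProb, resistance, prod_range_succ]
  field_simp

lemma visits_zero_eq_sum_resistance (ha : ∀ k, 1 ≤ a k) (N M : ℕ) :
    visits a N 0 = ∑ j ∈ range M, (1 - ∑ i ∈ range (j+1), levelDist a N i) * resistance a j
      + visits a N M * (upProb a M * resistance a M) := by
  induction M with
  | zero => simp [upProb, resistance]
  | succ M ih =>
    rw [ih, sum_range_succ, ← visits_flux_eq]
    linear_combination visits a N (M+1) * downProb_mul_resistance ha M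

lemma visits_zero_le_sum_resistance (ha : ∀ k, 1 ≤ a k) (N : ℕ) :
    visits a N 0 ≤ ∑ j ∈ range N, resistance a j := by
  rw [visits_zero_eq_sum_resistance ha N N, visits_eq_zero_of_le a le_rfl, zero_mul, add_zero]
  refine sum_le_sum fun j _ => mul_le_of_le_one_left (resistance_pos ha j).le ?_
  linarith [sum_nonneg fun i (_ : i ∈ range (j+1)) => levelDist_nonneg a N i]

lemma sum_resistance_le_tsum (ha : ∀ k, 1 ≤ a k) (h0 : Summable (fun n => levelDist a n 0))
    (M : ℕ) : ∑ j ∈ range M, resistance a j ≤ ∑' n, levelDist a n 0 := by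
  have hlim : Tendsto
      (fun N => ∑ j ∈ range M, (1 - ∑ i ∈ range (j+1), levelDist a N i) * resistance a j)
      atTop (𝓝 (∑ j ∈ range M, (1 - ∑ i ∈ range (j+1), (0 : ℝ)) * resistance a j)) :=
    tendsto_finsetSum _ fun j _ => ((tendsto_finsetSum _ fun i _ =>
      (summable_levelDist a h0 i).tendsto_atTop_zero).const_sub 1).mul_const _
  simp only [sum_const_zero, sub_zero, one_mul] at hlim
  refine le_of_tendsto' hlim fun N => ?_
  have hpot := mul_nonneg (visits_nonneg a N M)
    (mul_nonneg (upProb_nonneg a M) (resistance_pos ha M).le)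
  calc _ ≤ visits a N 0 := by rw [visits_zero_eq_sum_resistance ha N M]; linarith
    _ ≤ _ := h0.sum_le_tsum _ fun n _ => levelDist_nonneg a n 0

lemma summable_one_div_prod_iff (ha : ∀ k, 1 ≤ a k) :
    Summable (fun m => 1 / (∏ k ∈ range m, (a k : ℝ))) ↔ Summable (resistance a) := by
  have ha0 : (a 0 : ℝ) ≠ 0 := Nat.cast_ne_zero.2 (Nat.one_le_iff_ne_zero.1 (ha 0))
  rw [← summable_nat_add_iff 1, ← summable_mul_left_iff (inv_ne_zero ha0) (f := resistance a)]
  refine summable_congr fun m => ?_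
  simp only [prod_range_succ', resistance, prod_inv_distrib]
  field_simp

end Resistance

/-- **Transience criterion for spherically symmetric trees.**  Simple random
walk on the spherically symmetric tree with child counts `a` is transient
(i.e., the expected number of visits to the root, `∑ₙ P[walk is at the root at
time n]`, is finite) if and only if `∑ₘ 1/|T_m| < ∞`, where
`|T_m| = ∏_{k<m} a k` is the size of level `m`. -/
theorem sphericallySymmetric_transient_iff (a : ℕ → ℕ) (ha : ∀ k, 1 ≤ a k) :
    Summable (fun n => levelDist a n 0) ↔
      Summable (fun m => 1 / (∏ k ∈ Finset.range m, (a k : ℝ))) := by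
  rw [summable_one_div_prod_iff ha]
  constructor
  · intro h0
    exact summable_of_sum_range_le (fun j => (resistance_pos ha j).le)
      (sum_resistance_le_tsum ha h0)
  · intro hr
    refine summable_of_sum_range_le (c := ∑' j, resistance a j) (levelDist_nonneg a · 0)
      fun N => ?_
    calc visits a N 0 ≤ ∑ j ∈ range N, resistance a j := visits_zero_le_sum_resistance ha N
      _ ≤ ∑' j, resistance a j := hr.sum_le_tsum _ fun j _ => (resistance_pos ha j).le
end

section
/- Let T be a spherically symmetric tree with levels Tₙ, and suppose there exist constants 0 < c ≤ C and γ > 1 such that c·n^γ ≤ |Tₙ| ≤ C·n^γ for all n ≥ 1. Set Lₙ := Σ_{m>n} 1/|Tₘ|. Then the series Σ_{n≥1} 1/(|Tₙ|² Lₙ L_{n-1}) converges. -/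
open Finset Filter

set_option maxHeartbeats 1000000 in
/-- For a spherically symmetric tree whose level sizes `T n` grow polynomially
of degree `γ > 1` (i.e. `c·n^γ ≤ T n ≤ C·n^γ` for `n ≥ 1`), the series
`∑_{n ≥ 1} 1/(T n ^ 2 · L n · L (n-1))` converges, where
`L n := ∑_{m > n} 1 / T m`. -/
theorem series_converges_of_polynomial_growth
    (T : ℕ → ℝ) (hTpos : ∀ n, 0 < T n)
    (c C γ : ℝ) (hc : 0 < c) (hcC : c ≤ C) (hγ : 1 < γ)
    (hbound : ∀ n : ℕ, 1 ≤ n → c * (n : ℝ) ^ γ ≤ T n ∧ T n ≤ C * (n : ℝ) ^ γ)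
    (L : ℕ → ℝ) (hL : ∀ n, L n = ∑' m : ℕ, if n < m then 1 / T m else 0) :
    Summable (fun n : ℕ => 1 / (T (n+1) ^ 2 * L (n+1) * L n)) := by
  have hC : 0 < C := hc.trans_le hcC
  have hγ0 : (0:ℝ) ≤ γ := by linarith
  -- summability of 1/T
  have hsumT : Summable (fun m : ℕ => 1 / T m) := by
    rw [← summable_nat_add_iff 1]
    have hs : Summable (fun m : ℕ => (1/c) * ((m+1 : ℕ):ℝ) ^ (-γ)) :=
      ((summable_nat_add_iff 1).mpr
        (Real.summable_nat_rpow.mpr (by linarith))).mul_left (1/c)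
    refine Summable.of_nonneg_of_le (fun m => (one_div_pos.mpr (hTpos _)).le) ?_ hs
    intro m
    have h := (hbound (m+1) (by omega)).1
    have hp : (0:ℝ) < ((m+1:ℕ):ℝ) ^ γ := by
      apply Real.rpow_pos_of_pos; positivity
    rw [Real.rpow_neg (by positivity)]
    calc 1 / T (m+1) ≤ 1 / (c * ((m+1:ℕ):ℝ) ^ γ) :=
          one_div_le_one_div_of_le (by positivity) h
      _ = (1/c) * (((m+1:ℕ):ℝ) ^ γ)⁻¹ := by
          rw [one_div, mul_inv]; ring
  have hg : ∀ n : ℕ, Summable (fun m : ℕ => if n < m then 1 / T m else 0) := by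
    intro n
    refine Summable.of_nonneg_of_le ?_ ?_ hsumT
    · intro m; split
      · exact (one_div_pos.mpr (hTpos _)).le
      · exact le_rfl
    · intro m; split
      · exact le_rfl
      · exact (one_div_pos.mpr (hTpos _)).le
  -- lower bound on L n via finite sum
  have hLlow : ∀ n : ℕ, ((n:ℝ)+2) * (1 / (C * (2*(n:ℝ)+2) ^ γ)) ≤ L n := by
    intro n
    have hb : (0:ℝ) < 2*(n:ℝ)+2 := by positivity
    rw [hL n]
    have hcard : (Finset.Ioc n (2*n+2)).card = n + 2 := by
      rw [Nat.card_Ioc]; omega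
    calc ((n:ℝ)+2) * (1 / (C * (2*(n:ℝ)+2) ^ γ))
        = ∑ m ∈ Finset.Ioc n (2*n+2), (1 / (C * (2*(n:ℝ)+2) ^ γ)) := by
          rw [Finset.sum_const, hcard, nsmul_eq_mul]; push_cast; ring
      _ ≤ ∑ m ∈ Finset.Ioc n (2*n+2), (if n < m then 1 / T m else 0) := by
          apply Finset.sum_le_sum
          intro m hm
          rw [Finset.mem_Ioc] at hm
          rw [if_pos hm.1]
          apply one_div_le_one_div_of_le (hTpos m)
          have h2 := (hbound m (by omega)).2
          calc T m ≤ C * (m:ℝ) ^ γ := h2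
            _ ≤ C * (2*(n:ℝ)+2) ^ γ := by
                apply mul_le_mul_of_nonneg_left _ hC.le
                apply Real.rpow_le_rpow (by positivity) _ hγ0
                have h3 : (m:ℝ) ≤ ((2*n+2:ℕ):ℝ) := Nat.cast_le.mpr hm.2
                push_cast at h3
                linarith
      _ ≤ ∑' m : ℕ, (if n < m then 1 / T m else 0) := by
          apply Summable.sum_le_tsum _ _ (hg n)
          intro m _
          split
          · exact (one_div_pos.mpr (hTpos _)).le
          · exact le_rfl
  have hLpos : ∀ n : ℕ, 0 < L n := by
    intro n
    refine lt_of_lt_of_le ?_ (hLlow n)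
    positivity
  set K : ℝ := (C * 4 ^ γ) * (C * 2 ^ γ) / c ^ 2 with hK
  have hKpos : 0 < K := by
    rw [hK]; positivity
  refine Summable.of_nonneg_of_le ?_ ?_ ?_ (f := fun n : ℕ => K * (1 / ((n:ℝ)+1)^2))
  · intro n
    have h1 := hLpos n; have h2 := hLpos (n+1); have h3 := hTpos (n+1)
    positivity
  · intro n
    set a : ℝ := (n:ℝ) + 1 with ha
    have ha0 : (0:ℝ) < a := by positivity
    have ha1 : 1 ≤ a := by rw [ha]; have : (0:ℝ) ≤ (n:ℝ) := Nat.cast_nonneg n; linarith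
    have hPa : 0 < a ^ γ := Real.rpow_pos_of_pos ha0 γ
    have hQa : 0 < a ^ (1-γ) := Real.rpow_pos_of_pos ha0 _
    have h2g : (0:ℝ) < (2:ℝ) ^ γ := Real.rpow_pos_of_pos (by norm_num) γ
    have h4g : (0:ℝ) < (4:ℝ) ^ γ := Real.rpow_pos_of_pos (by norm_num) γ
    -- T (n+1) ≥ c a^γ
    have hT1 : c * a ^ γ ≤ T (n+1) := by
      have h := (hbound (n+1) (by omega)).1
      have : ((n+1:ℕ):ℝ) = a := by rw [ha]; push_cast; ring
      rwa [this] at h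
    -- L n ≥ a^(1-γ) / (C * 2^γ)
    have hLn : a ^ (1-γ) / (C * 2 ^ γ) ≤ L n := by
      refine le_trans ?_ (hLlow n)
      have h2a : 2*(n:ℝ)+2 = 2*a := by rw [ha]; ring
      have h2m : (2*a) ^ γ = 2 ^ γ * a ^ γ := Real.mul_rpow (by norm_num) ha0.le
      have hexp : a ^ (1-γ) = a / a ^ γ := by
        rw [Real.rpow_sub ha0, Real.rpow_one]
      have step1 : a ^ (1-γ) / (C * 2 ^ γ) = a / (C * (2*a) ^ γ) := by
        rw [hexp, h2m]; ring
      rw [h2a, step1, mul_one_div]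
      have hp : (0:ℝ) < C * (2*a) ^ γ := by positivity
      exact (div_le_div_iff_of_pos_right hp).mpr (by rw [ha]; linarith)
    -- L (n+1) ≥ a^(1-γ) / (C * 4^γ)
    have hLn1 : a ^ (1-γ) / (C * 4 ^ γ) ≤ L (n+1) := by
      refine le_trans ?_ (hLlow (n+1))
      have hc1 : ((n+1:ℕ):ℝ) = a := by rw [ha]; push_cast; ring
      rw [hc1]
      have h4a : (2*a+2) ^ γ ≤ (4*a) ^ γ :=
        Real.rpow_le_rpow (by linarith) (by linarith) hγ0
      have h4m : (4*a) ^ γ = 4 ^ γ * a ^ γ := Real.mul_rpow (by norm_num) ha0.le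
      have hexp : a ^ (1-γ) = a / a ^ γ := by
        rw [Real.rpow_sub ha0, Real.rpow_one]
      have step1 : a ^ (1-γ) / (C * 4 ^ γ) = a / (C * (4 ^ γ * a ^ γ)) := by
        rw [hexp]; ring
      have h2a2 : (0:ℝ) < (2*a+2) ^ γ := Real.rpow_pos_of_pos (by linarith) γ
      rw [step1]
      calc a / (C * (4 ^ γ * a ^ γ)) = a / (C * (4*a) ^ γ) := by rw [h4m]
        _ ≤ a / (C * (2*a+2) ^ γ) := by
            apply div_le_div_of_nonneg_left ha0.le (by positivity)
            exact mul_le_mul_of_nonneg_left h4a hC.le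
        _ ≤ (a+2) * (1 / (C * (2*a+2) ^ γ)) := by
            rw [mul_one_div]
            exact (div_le_div_iff_of_pos_right (by positivity)).mpr (by linarith)
    -- combine
    have hD : (c * a ^ γ)^2 * (a ^ (1-γ) / (C * 4 ^ γ)) * (a ^ (1-γ) / (C * 2 ^ γ))
        ≤ T (n+1) ^ 2 * L (n+1) * L n := by
      have h1 : (c * a ^ γ)^2 ≤ T (n+1)^2 := pow_le_pow_left₀ (by positivity) hT1 2
      refine mul_le_mul (mul_le_mul h1 hLn1 (by positivity) (sq_nonneg _)) hLn
        (by positivity) (mul_nonneg (sq_nonneg _) (hLpos _).le)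
    have hDpos : 0 < (c * a ^ γ)^2 * (a ^ (1-γ) / (C * 4 ^ γ)) * (a ^ (1-γ) / (C * 2 ^ γ)) := by
      positivity
    refine (one_div_le_one_div_of_le hDpos hD).trans (le_of_eq ?_)
    have hprod : a ^ γ * a ^ γ * (a ^ (1-γ) * a ^ (1-γ)) = a ^ 2 := by
      rw [← Real.rpow_add ha0, ← Real.rpow_add ha0, ← Real.rpow_add ha0,
        ← Real.rpow_natCast a 2]
      congr 1; push_cast; ring
    have hden : (c * a ^ γ)^2 * (a ^ (1-γ) / (C * 4 ^ γ)) * (a ^ (1-γ) / (C * 2 ^ γ))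
        = c^2 * a^2 / ((C * 4 ^ γ) * (C * 2 ^ γ)) := by
      rw [← hprod]
      field_simp [hC.ne', h2g.ne', h4g.ne']
    rw [hden, hK]
    field_simp
  · have h1 : Summable (fun n : ℕ => 1 / ((n:ℝ)+1)^2) := by
      have h2 := (summable_nat_add_iff 1).mpr
        (Real.summable_one_div_nat_pow.mpr (one_lt_two (α := ℕ)))
      simpa using h2
    exact h1.mul_left K
end

section
/- Let T be a spherically symmetric tree with levels Tₙ and suppose liminf_{n→∞} |T_{n+1}|/|Tₙ| = ρ for some ρ ∈ (1, ∞). Set Lₙ := Σ_{m>n} 1/|Tₘ| (which is finite since |Tₙ| grows exponentially). Then the series Σ_{n≥1} 1/(|Tₙ|² Lₙ L_{n-1}) diverges. -/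
open Finset Filter

set_option maxHeartbeats 1000000 in
/-- For a spherically symmetric tree whose level sizes `T n` satisfy
`liminf T (n+1) / T n = ρ` for some `ρ ∈ (1, ∞)`, the series
`∑_{n ≥ 1} 1/(T n ^ 2 · L n · L (n-1))` diverges, where
`L n := ∑_{m > n} 1 / T m`. -/
theorem series_diverges_of_exponential_growth
    (T : ℕ → ℝ) (hTpos : ∀ n, 0 < T n)
    (ρ : ℝ) (hρ₁ : 1 < ρ)
    (hliminf : liminf (fun n => T (n+1) / T n) atTop = ρ)
    (L : ℕ → ℝ) (hL : ∀ n, L n = ∑' m : ℕ, if n < m then 1 / T m else 0) :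
    ¬ Summable (fun n : ℕ => 1 / (T (n+1) ^ 2 * L (n+1) * L n)) := by
  have hT1pos : ∀ m : ℕ, (0:ℝ) < 1 / T m := fun m => div_pos one_pos (hTpos m)
  -- choose r strictly between 1 and ρ
  set r : ℝ := (1 + ρ) / 2 with hr_def
  have hr1 : 1 < r := by rw [hr_def]; linarith
  have hr0 : 0 < r := by linarith
  have hrρ : r < ρ := by rw [hr_def]; linarith
  -- eventually r * T n ≤ T (n+1)
  have hbdd : IsBoundedUnder (· ≥ ·) atTop (fun n => T (n+1) / T n) :=
    isBoundedUnder_of ⟨0, fun n => div_nonneg (hTpos _).le (hTpos _).le⟩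
  have hev : ∀ᶠ n in atTop, r < T (n+1) / T n := by
    apply eventually_lt_of_lt_liminf
    · rw [hliminf]; exact hrρ
    · exact hbdd
  obtain ⟨N, hN⟩ := eventually_atTop.mp hev
  have hstep : ∀ m, N ≤ m → r * T m ≤ T (m + 1) := by
    intro m hm
    have h := hN m hm
    have hTm := hTpos m
    rw [lt_div_iff₀ hTm] at h
    linarith
  -- growth: T n * r^k ≤ T (n+k) for n ≥ N
  have hgrow : ∀ n, N ≤ n → ∀ k, T n * r ^ k ≤ T (n + k) := by
    intro n hn k
    induction k with
    | zero => simp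
    | succ k ih =>
      have h1 : r * T (n + k) ≤ T (n + k + 1) := hstep _ (le_trans hn (Nat.le_add_right _ _))
      calc T n * r ^ (k + 1) = (T n * r ^ k) * r := by ring
        _ ≤ T (n + k) * r := mul_le_mul_of_nonneg_right ih (le_of_lt hr0)
        _ ≤ T (n + k + 1) := by linarith
  -- summability of 1/T
  have hsum1T : Summable (fun m : ℕ => 1 / T m) := by
    apply summable_of_ratio_norm_eventually_le (r := 1 / r)
    · rw [div_lt_one hr0]; exact hr1
    · filter_upwards [eventually_ge_atTop N] with n hn
      have h1 := hstep n hn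
      have h2 := hTpos n
      have h3 := hTpos (n + 1)
      rw [Real.norm_eq_abs, Real.norm_eq_abs, abs_of_pos (hT1pos (n+1)),
        abs_of_pos (hT1pos n)]
      rw [div_mul_div_comm, one_mul, div_le_div_iff₀ h3 (by positivity)]
      nlinarith
  -- summability of the L-summand
  have hsumL : ∀ n, Summable (fun m : ℕ => if n < m then 1 / T m else 0) := by
    intro n
    apply Summable.of_nonneg_of_le _ _ hsum1T
    · intro m
      split
      · exact (hT1pos m).le
      · exact le_rfl
    · intro m
      split
      · exact le_rfl
      · exact (hT1pos m).le
  -- positivity of L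
  have hLpos : ∀ n, 0 < L n := by
    intro n
    rw [hL n]
    have h1 : (0:ℝ) < (if n < n + 1 then 1 / T (n+1) else 0) := by
      rw [if_pos (Nat.lt_succ_self n)]; exact hT1pos (n+1)
    refine lt_of_lt_of_le h1 (Summable.le_tsum (hsumL n) (n+1) ?_)
    intro m _
    split
    · exact (hT1pos m).le
    · exact le_rfl
  -- constant c
  set c : ℝ := (1 - 1 / r)⁻¹ with hc_def
  have hrinv : (0:ℝ) ≤ 1 / r := by positivity
  have hrinv1 : 1 / r < 1 := by rw [div_lt_one hr0]; exact hr1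
  have hcpos : 0 < c := by rw [hc_def, inv_pos]; linarith
  -- upper bound on L
  have hLub : ∀ n, N ≤ n → L n ≤ c / T (n + 1) := by
    intro n hn
    have hshift : L n = ∑' k : ℕ, 1 / T (k + (n + 1)) := by
      rw [hL n]
      rw [← Summable.sum_add_tsum_nat_add (n+1) (hsumL n)]
      have hz : ∀ i ∈ Finset.range (n+1), (if n < i then 1 / T i else 0) = 0 := by
        intro i hi
        rw [if_neg (by simp at hi; omega)]
      rw [Finset.sum_congr rfl hz, Finset.sum_const_zero, zero_add]
      exact tsum_congr fun k => if_pos (by omega)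
    rw [hshift]
    have hsummf : Summable (fun k : ℕ => 1 / T (k + (n + 1))) :=
      (summable_nat_add_iff (n+1)).mpr hsum1T
    have hsummg : Summable (fun k : ℕ => 1 / T (n + 1) * (1 / r) ^ k) :=
      (summable_geometric_of_lt_one hrinv hrinv1).mul_left _
    have hterm : ∀ k : ℕ, 1 / T (k + (n + 1)) ≤ 1 / T (n + 1) * (1 / r) ^ k := by
      intro k
      have h1 : T (n + 1) * r ^ k ≤ T (n + 1 + k) := hgrow (n+1) (by omega) k
      rw [show k + (n + 1) = n + 1 + k by ring]
      have h2 := hTpos (n + 1 + k)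
      have h3 := hTpos (n + 1)
      have hrk : (0:ℝ) < r ^ k := by positivity
      rw [div_pow, one_pow, div_mul_div_comm, one_mul, div_le_div_iff₀ h2 (by positivity)]
      nlinarith
    calc (∑' k : ℕ, 1 / T (k + (n + 1))) ≤ ∑' k : ℕ, 1 / T (n + 1) * (1 / r) ^ k :=
          Summable.tsum_le_tsum hterm hsummf hsummg
      _ = 1 / T (n + 1) * (1 - 1/r)⁻¹ := by
          rw [tsum_mul_left, tsum_geometric_of_lt_one hrinv hrinv1]
      _ = c / T (n + 1) := by rw [hc_def]; ring
  -- now derive contradiction from summability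
  intro hsum
  have htend := hsum.tendsto_atTop_zero
  have hε : (0:ℝ) < r / c ^ 2 := by positivity
  have hsmall : ∀ᶠ n in atTop, 1 / (T (n+1) ^ 2 * L (n+1) * L n) < r / c ^ 2 :=
    htend.eventually (eventually_lt_nhds hε)
  have hbig : ∀ᶠ n in atTop, r / c ^ 2 ≤ 1 / (T (n+1) ^ 2 * L (n+1) * L n) := by
    filter_upwards [eventually_ge_atTop N] with n hn
    have hT1 := hTpos (n + 1)
    have hT2 := hTpos (n + 2)
    have hL1 := hLpos n
    have hL2 := hLpos (n + 1)
    have hb1 : L n ≤ c / T (n + 1) := hLub n hn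
    have hb2 : L (n + 1) ≤ c / T (n + 2) := hLub (n+1) (by omega)
    have hratio : r * T (n + 1) ≤ T (n + 2) := hstep (n+1) (by omega)
    have hxpos : 0 < T (n+1) ^ 2 * L (n+1) * L n := by positivity
    have hq : T (n+1) / T (n+2) ≤ 1 / r := by
      rw [div_le_div_iff₀ hT2 hr0]
      nlinarith
    have hxle : T (n+1) ^ 2 * L (n+1) * L n ≤ c ^ 2 / r := by
      calc T (n+1) ^ 2 * L (n+1) * L n ≤ T (n+1) ^ 2 * (c / T (n+2)) * (c / T (n+1)) := by
            apply mul_le_mul (mul_le_mul le_rfl hb2 (le_of_lt hL2) (by positivity)) hb1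
              (le_of_lt hL1) (by positivity)
        _ = c ^ 2 * (T (n+1) / T (n+2)) := by field_simp
        _ ≤ c ^ 2 * (1 / r) := mul_le_mul_of_nonneg_left hq (by positivity)
        _ = c ^ 2 / r := by ring
    calc r / c ^ 2 = 1 / (c ^ 2 / r) := by field_simp
      _ ≤ 1 / (T (n+1) ^ 2 * L (n+1) * L n) := one_div_le_one_div_of_le hxpos hxle
  obtain ⟨n, h1, h2⟩ := (hsmall.and hbig).exists
  linarith
end

section
/- Let μ be a probability measure on {0,1}^E for a countable edge set E, and for an edge e with 0 < μ[ω(e)=1] < 1 let μ_e and μ_{¬e} denote μ conditioned on ω(e)=1 and ω(e)=0 respectively, both restricted to the σ-field generated by the coordinates in E∖{e}. Then the following are equivalent: (a) the completion of the σ-field generated by the coordinate at e is contained in the completed σ-field generated by the other coordinates (change intolerance at e); (b) μ_e ⊥ μ_{¬e}. -/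
/-!
Write `S = {ω | ω e = true}` and `𝒢` for the σ-field of the coordinates off `e`. Both conditions
say that `S` is `μ`-a.e. equal to a set in `𝒢`. For the completions this is because the σ-field of
the coordinate at `e` is generated by `S`. For the conditioned measures, a `𝒢`-measurable set `t`
with `μ_e t = 0` and `μ_{¬e} tᶜ = 0` is exactly one with `μ (S ∩ t) = 0 = μ (Sᶜ ∩ tᶜ)`, i.e. with
`S =ᵐ[μ] tᶜ`.
-/

open MeasureTheory ProbabilityTheory

/-- The σ-field on configurations `{0,1}^E` generated by the coordinates in
`K ⊆ E`. -/
def coordSigma (E : Type*) (K : Set E) : MeasurableSpace (E → Bool) :=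
  ⨆ e ∈ K, MeasurableSpace.comap (fun ω => ω e) ⊤

lemma coordSigma_le (E : Type*) (K : Set E) :
    coordSigma E K ≤ MeasurableSpace.pi :=
  iSup₂_le fun e _ => (measurable_pi_apply e).comap_le

/-- The `μ`-completion of a sub-σ-field `m₀`: the σ-field generated by all
sets differing from an `m₀`-measurable set by a `μ`-null set. -/
def completionOf {Ω : Type*} [MeasurableSpace Ω] (μ : Measure Ω)
    (m₀ : MeasurableSpace Ω) : MeasurableSpace Ω :=
  MeasurableSpace.generateFrom
    {A | ∃ B, MeasurableSet[m₀] B ∧ μ (symmDiff A B) = 0}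

section Completion

-- `mΩ` comes after the sub-σ-fields so that it is the instance `completionOf` is elaborated with.
variable {Ω : Type*} {m₀ m₁ m₂ mΩ : MeasurableSpace Ω} (μ : Measure[mΩ] Ω)

variable (m₀) in
def aeEqClosure : MeasurableSpace Ω where
  MeasurableSet' A := ∃ B, MeasurableSet[m₀] B ∧ A =ᵐ[μ] B
  measurableSet_empty := ⟨∅, @MeasurableSet.empty _ m₀, Filter.EventuallyEq.rfl⟩
  measurableSet_compl := fun _ ⟨B, hB, hAB⟩ => ⟨Bᶜ, hB.compl, hAB.compl⟩
  measurableSet_iUnion := fun _ h => by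
    choose B hB hAB using h
    exact ⟨⋃ i, B i, MeasurableSet.iUnion hB, Filter.EventuallyEq.countable_iUnion hAB⟩

theorem measurableSet_completionOf_iff {A : Set Ω} :
    MeasurableSet[completionOf μ m₀] A ↔ ∃ B, MeasurableSet[m₀] B ∧ A =ᵐ[μ] B := by
  refine ⟨fun hA => MeasurableSpace.generateFrom_le (m := aeEqClosure m₀ μ) ?_ A hA,
    fun ⟨B, hB, hAB⟩ => MeasurableSpace.measurableSet_generateFrom
      ⟨B, hB, measure_symmDiff_eq_zero_iff.2 hAB⟩⟩
  rintro A ⟨B, hB, hAB⟩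
  exact ⟨B, hB, measure_symmDiff_eq_zero_iff.1 hAB⟩

theorem le_completionOf : m₀ ≤ completionOf μ m₀ :=
  fun A hA => (measurableSet_completionOf_iff μ).2 ⟨A, hA, Filter.EventuallyEq.rfl⟩

theorem completionOf_le_completionOf_iff :
    completionOf μ m₁ ≤ completionOf μ m₂ ↔ m₁ ≤ completionOf μ m₂ := by
  refine ⟨(le_completionOf μ).trans, fun h => MeasurableSpace.generateFrom_le ?_⟩
  rintro A ⟨B, hB, hAB⟩
  obtain ⟨C, hC, hBC⟩ := (measurableSet_completionOf_iff μ).1 (h B hB)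
  exact (measurableSet_completionOf_iff μ).2
    ⟨C, hC, (measure_symmDiff_eq_zero_iff.1 hAB).trans hBC⟩

end Completion

theorem MeasurableSpace.comap_top_le_iff_measurableSet_preimage_true {Ω : Type*}
    {m : MeasurableSpace Ω} {f : Ω → Bool} :
    MeasurableSpace.comap f ⊤ ≤ m ↔ MeasurableSet[m] (f ⁻¹' {true}) :=
  ⟨fun h => h _ ⟨{true}, trivial, rfl⟩, fun h => (@measurable_to_bool _ m _ h).comap_le⟩

theorem coordSigma_singleton (E : Type*) (e : E) :
    coordSigma E {e} = MeasurableSpace.comap (fun ω => ω e) ⊤ := by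
  simp [coordSigma]

theorem ProbabilityTheory.cond_apply_eq_zero_iff {Ω : Type*} [MeasurableSpace Ω]
    {μ : Measure Ω} [IsFiniteMeasure μ] {s : Set Ω} (hs : MeasurableSet s) (t : Set Ω) :
    μ[t | s] = 0 ↔ μ (s ∩ t) = 0 := by
  simp [cond_apply hs, measure_ne_top]

theorem mutuallySingular_trim_cond_compl_iff_exists_ae_eq {Ω : Type*} {m mΩ : MeasurableSpace Ω}
    (hm : m ≤ mΩ) {μ : Measure Ω} [IsFiniteMeasure μ] {s : Set Ω} (hs : MeasurableSet s) :
    (μ[|s]).trim hm ⟂ₘ (μ[|sᶜ]).trim hm ↔ ∃ t, MeasurableSet[m] t ∧ s =ᵐ[μ] t := by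
  have separating_iff_ae_eq_compl : ∀ u, MeasurableSet[m] u →
      ((μ[|s]).trim hm u = 0 ∧ (μ[|sᶜ]).trim hm uᶜ = 0 ↔ s =ᵐ[μ] (uᶜ : Set Ω)) := by
    intro u hu
    rw [trim_measurableSet_eq hm hu, trim_measurableSet_eq hm hu.compl,
      cond_apply_eq_zero_iff hs, cond_apply_eq_zero_iff hs.compl, ae_eq_set, Set.sdiff_compl,
      Set.sdiff_eq, Set.inter_comm uᶜ]
  constructor
  · rintro ⟨u, hu, hsu, hsu'⟩
    exact ⟨uᶜ, hu.compl, (separating_iff_ae_eq_compl u hu).1 ⟨hsu, hsu'⟩⟩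
  · rintro ⟨t, ht, hst⟩
    refine ⟨tᶜ, ht.compl, (separating_iff_ae_eq_compl tᶜ ht.compl).2 ?_⟩
    rwa [compl_compl]

theorem change_intolerant_iff_mutuallySingular_general
    (E : Type*) (μ : Measure (E → Bool)) [IsProbabilityMeasure μ]
    (e : E) :
    completionOf μ (coordSigma E {e}) ≤ completionOf μ (coordSigma E ({e}ᶜ))
      ↔
    Measure.MutuallySingular
      ((μ[|{ω | ω e = true}]).trim (coordSigma_le E ({e}ᶜ)))
      ((μ[|{ω | ω e = false}]).trim (coordSigma_le E ({e}ᶜ))) := by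
  have hS : MeasurableSet {ω : E → Bool | ω e = true} :=
    measurableSet_eq_fun (measurable_pi_apply e) measurable_const
  have hfalse : {ω : E → Bool | ω e = false} = {ω | ω e = true}ᶜ := by
    ext; simp
  rw [hfalse, mutuallySingular_trim_cond_compl_iff_exists_ae_eq _ hS, completionOf_le_completionOf_iff,
    coordSigma_singleton, MeasurableSpace.comap_top_le_iff_measurableSet_preimage_true,
    measurableSet_completionOf_iff]
  rfl

/-- **Change intolerance at an edge is equivalent to mutual singularity of the
conditioned measures.**  Let `μ` be a probability measure on `{0,1}^E` and `e`
an edge with `0 < μ[ω(e)=1] < 1`.  Then the `μ`-completion of the σ-field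
generated by the coordinate at `e` is contained in the `μ`-completion of the
σ-field generated by the other coordinates if and only if `μ_e ⊥ μ_{¬e}`,
where `μ_e` (resp. `μ_{¬e}`) is `μ` conditioned on `ω(e)=1` (resp. `ω(e)=0`)
and restricted to the σ-field generated by the coordinates in `E ∖ {e}`. -/
theorem change_intolerant_iff_mutuallySingular
    (E : Type*) [Countable E] (μ : Measure (E → Bool)) [IsProbabilityMeasure μ]
    (e : E) (h0 : 0 < μ {ω | ω e = true}) (h1 : μ {ω | ω e = true} < 1) :
    completionOf μ (coordSigma E {e}) ≤ completionOf μ (coordSigma E ({e}ᶜ))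
      ↔
    Measure.MutuallySingular
      ((μ[|{ω | ω e = true}]).trim (coordSigma_le E ({e}ᶜ)))
      ((μ[|{ω | ω e = false}]).trim (coordSigma_le E ({e}ᶜ))) :=
  change_intolerant_iff_mutuallySingular_general E μ e
end

section
/- Let T be an infinite rooted tree with root o, let I(x) ≥ 0 be a unit flow on T (I(o)=1 and I(x) = Σ_{y child of x} I(y)), and let h : V(T) → (0,1] satisfy h(o) = 1 and h(x) ≤ h(x̂) for all x ≠ o (x̂ the parent of x). Then for every n, Σ_{x,y ∈ Tₙ} I(x)I(y)/h(x∧y) = 1 + Σ_{u: 0<|u|≤n} I(u)² (1/h(u) − 1/h(û)), where x∧y is the most recent common ancestor of x and y and Tₙ is the n-th level. -/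
open Finset

/-- A locally finite infinite rooted tree, described by its vertex set,
root, parent function, depth function and (finite, nonempty) levels. -/
structure LFRootedTree where
  V : Type
  decEq : DecidableEq V
  root : V
  parent : V → V
  depth : V → ℕ
  lev : ℕ → Finset V
  mem_lev : ∀ n x, x ∈ lev n ↔ depth x = n
  depth_root : depth root = 0
  eq_root_of_depth_zero : ∀ x, depth x = 0 → x = root
  depth_parent : ∀ x, x ≠ root → depth (parent x) + 1 = depth x
  parent_iterate_depth : ∀ x, parent^[depth x] x = root
  lev_nonempty : ∀ n, (lev n).Nonempty

attribute [instance] LFRootedTree.decEq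

namespace LFRootedTree

variable (T : LFRootedTree)

/-- The children of a vertex `x`. -/
def children (x : T.V) : Finset T.V :=
  (T.lev (T.depth x + 1)).filter (fun y => T.parent y = x)

/-- A unit flow from the root to infinity. -/
def IsUnitFlow (θ : T.V → ℝ) : Prop :=
  (∀ x, 0 ≤ θ x) ∧ θ T.root = 1 ∧ ∀ x, θ x = ∑ y ∈ T.children x, θ y

/-- The most recent common ancestor `x ∧ y` of two vertices: the common
iterated parent of `x` and `y` furthest from the root. -/
noncomputable def mca (x y : T.V) : T.V := by
  classical
  exact if h : ∃ k, T.parent^[k] x = T.parent^[k] y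
    then T.parent^[Nat.find h] x else x

end LFRootedTree

/-!
Group the pairs at level `n + 1` by their parents. For `x ≠ y` at the same depth, `x ∧ y` equals
the meet of their parents, while for `x = y` the term changes by `I(x)² (1/h(x) − 1/h(x̂))`.
Summing the parents' terms with flow conservation gives the level-`n` sum back, so the level sums
telescope from the root term `I(o)²/h(o) = 1`.
-/

namespace LFRootedTree

variable (T : LFRootedTree)

lemma lev_zero : T.lev 0 = {T.root} := by
  ext x
  simp only [T.mem_lev, Finset.mem_singleton]
  exact ⟨T.eq_root_of_depth_zero x, fun hx => hx ▸ T.depth_root⟩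

variable {T}

lemma mem_children {a x : T.V} :
    x ∈ T.children a ↔ T.depth x = T.depth a + 1 ∧ T.parent x = a := by
  simp [children, T.mem_lev]

lemma ne_root_of_depth_eq_of_ne {x y : T.V} (hd : T.depth x = T.depth y) (hne : x ≠ y) :
    x ≠ T.root := by
  rintro rfl
  exact hne (T.eq_root_of_depth_zero y (by rw [← hd, T.depth_root])).symm

variable (T)

lemma lev_succ (n : ℕ) : T.lev (n + 1) = (T.lev n).biUnion T.children := by
  ext x
  simp only [T.mem_lev, Finset.mem_biUnion, mem_children]
  constructor
  · intro hx
    have hxr : x ≠ T.root := by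
      rintro rfl
      rw [T.depth_root] at hx
      omega
    have := T.depth_parent x hxr
    exact ⟨T.parent x, by omega, by omega, rfl⟩
  · rintro ⟨a, ha, hx, -⟩
    omega

lemma pairwiseDisjoint_children (s : Set T.V) : s.PairwiseDisjoint T.children := by
  intro a _ b _ hab
  refine Finset.disjoint_left.mpr fun x hxa hxb => hab ?_
  rw [← (mem_children.mp hxa).2, (mem_children.mp hxb).2]

lemma mca_eq_iterate {x y : T.V} {k : ℕ} (hk : T.parent^[k] x = T.parent^[k] y)
    (hmin : ∀ j < k, T.parent^[j] x ≠ T.parent^[j] y) : T.mca x y = T.parent^[k] x := by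
  have hex : ∃ m, T.parent^[m] x = T.parent^[m] y := ⟨k, hk⟩
  have hfind : Nat.find hex = k :=
    le_antisymm (Nat.find_le hk) (not_lt.1 fun hlt => hmin _ hlt (Nat.find_spec hex))
  rw [mca, dif_pos hex, hfind]

lemma mca_self (x : T.V) : T.mca x x = x :=
  T.mca_eq_iterate (k := 0) rfl (by omega)

lemma mca_eq_mca_parent {x y : T.V} (hd : T.depth x = T.depth y) (hne : x ≠ y) :
    T.mca x y = T.mca (T.parent x) (T.parent y) := by
  have hdx := T.depth_parent x (ne_root_of_depth_eq_of_ne hd hne)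
  have hdy := T.depth_parent y (ne_root_of_depth_eq_of_ne hd.symm hne.symm)
  have hex : ∃ m, T.parent^[m] (T.parent x) = T.parent^[m] (T.parent y) :=
    ⟨T.depth (T.parent x), by
      rw [T.parent_iterate_depth, show T.depth (T.parent x) = T.depth (T.parent y) by omega,
        T.parent_iterate_depth]⟩
  have hmin : ∀ j < Nat.find hex, T.parent^[j] (T.parent x) ≠ T.parent^[j] (T.parent y) :=
    fun j hj => Nat.find_min hex hj
  rw [T.mca_eq_iterate (Nat.find_spec hex) hmin,
    T.mca_eq_iterate (k := Nat.find hex + 1) (Nat.find_spec hex)]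
  · rfl
  · rintro (_ | j) hj
    · exact hne
    · exact hmin j (by omega)

lemma div_mca_eq_div_mca_parent (h : T.V → ℝ) (c : ℝ) {x y : T.V}
    (hd : T.depth x = T.depth y) :
    c / h (T.mca x y) = c / h (T.mca (T.parent x) (T.parent y))
      + if x = y then c * (1 / h x - 1 / h (T.parent x)) else 0 := by
  by_cases hxy : x = y
  · subst hxy
    rw [if_pos rfl, T.mca_self, T.mca_self]
    ring
  · rw [if_neg hxy, add_zero, T.mca_eq_mca_parent hd hxy]

lemma sum_lev_succ_mul_parent {I : T.V → ℝ} (hflow : ∀ x, I x = ∑ y ∈ T.children x, I y)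
    (g : T.V → ℝ) (n : ℕ) :
    ∑ x ∈ T.lev (n + 1), I x * g (T.parent x) = ∑ a ∈ T.lev n, I a * g a := by
  rw [T.lev_succ, Finset.sum_biUnion (T.pairwiseDisjoint_children _)]
  refine Finset.sum_congr rfl fun a _ => ?_
  rw [hflow a, Finset.sum_mul]
  exact Finset.sum_congr rfl fun x hx => by rw [(mem_children.mp hx).2]

lemma sum_lev_succ_div_mca {I : T.V → ℝ} (hflow : ∀ x, I x = ∑ y ∈ T.children x, I y)
    (h : T.V → ℝ) (n : ℕ) :
    ∑ x ∈ T.lev (n + 1), ∑ y ∈ T.lev (n + 1), I x * I y / h (T.mca x y)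
      = ∑ a ∈ T.lev n, ∑ b ∈ T.lev n, I a * I b / h (T.mca a b)
        + ∑ u ∈ T.lev (n + 1), I u ^ 2 * (1 / h u - 1 / h (T.parent u)) := by
  have hd : ∀ x ∈ T.lev (n + 1), ∀ y ∈ T.lev (n + 1), T.depth x = T.depth y := by
    intro x hx y hy
    rw [(T.mem_lev _ _).mp hx, (T.mem_lev _ _).mp hy]
  have hinner : ∀ x, ∑ y ∈ T.lev (n + 1), I x * I y / h (T.mca (T.parent x) (T.parent y))
      = I x * ∑ b ∈ T.lev n, I b / h (T.mca (T.parent x) b) := by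
    intro x
    rw [Finset.mul_sum]
    calc ∑ y ∈ T.lev (n + 1), I x * I y / h (T.mca (T.parent x) (T.parent y))
        = ∑ y ∈ T.lev (n + 1), I y * (I x / h (T.mca (T.parent x) (T.parent y))) :=
          Finset.sum_congr rfl fun y _ => by ring
      _ = ∑ b ∈ T.lev n, I b * (I x / h (T.mca (T.parent x) b)) :=
          T.sum_lev_succ_mul_parent hflow (fun b => I x / h (T.mca (T.parent x) b)) n
      _ = ∑ b ∈ T.lev n, I x * (I b / h (T.mca (T.parent x) b)) :=
          Finset.sum_congr rfl fun b _ => by ring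
  have houter : ∑ x ∈ T.lev (n + 1), I x * ∑ b ∈ T.lev n, I b / h (T.mca (T.parent x) b)
      = ∑ a ∈ T.lev n, ∑ b ∈ T.lev n, I a * I b / h (T.mca a b) := by
    rw [T.sum_lev_succ_mul_parent hflow (fun a => ∑ b ∈ T.lev n, I b / h (T.mca a b)) n]
    exact Finset.sum_congr rfl fun a _ => by rw [Finset.mul_sum]; ring_nf
  calc ∑ x ∈ T.lev (n + 1), ∑ y ∈ T.lev (n + 1), I x * I y / h (T.mca x y)
      = ∑ x ∈ T.lev (n + 1), (I x * ∑ b ∈ T.lev n, I b / h (T.mca (T.parent x) b)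
          + I x * I x * (1 / h x - 1 / h (T.parent x))) := by
        refine Finset.sum_congr rfl fun x hx => ?_
        rw [Finset.sum_congr rfl fun y hy =>
            T.div_mca_eq_div_mca_parent h (I x * I y) (hd x hx y hy),
          Finset.sum_add_distrib, hinner, Finset.sum_ite_eq, if_pos hx]
    _ = _ := by
        rw [Finset.sum_add_distrib, houter]
        exact congrArg _ (Finset.sum_congr rfl fun u _ => by ring)

end LFRootedTree

theorem flow_harmonic_identity_general (T : LFRootedTree)
    (I : T.V → ℝ) (hI : T.IsUnitFlow I)
    (h : T.V → ℝ) (hroot : h T.root = 1) (n : ℕ) :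
    ∑ x ∈ T.lev n, ∑ y ∈ T.lev n, I x * I y / h (T.mca x y)
      = 1 + ∑ k ∈ Finset.Icc 1 n, ∑ u ∈ T.lev k,
          I u ^ 2 * (1 / h u - 1 / h (T.parent u)) := by
  obtain ⟨-, hI_root, hflow⟩ := hI
  induction n with
  | zero => simp [T.lev_zero, T.mca_self, hroot, hI_root]
  | succ n ih =>
    rw [T.sum_lev_succ_div_mca hflow, ih, Finset.sum_Icc_succ_top (by omega), add_assoc]

/-- **The key combinatorial identity.**  Let `I` be a unit flow on an infinite
rooted tree and `h` a positive function on the vertices with `h(o) = 1`,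
`0 < h ≤ 1`, and `h(x) ≤ h(x̂)` for `x ≠ o`.  Then for every `n`,
`∑_{x,y ∈ Tₙ} I(x)I(y)/h(x∧y)
  = 1 + ∑_{0<|u|≤n} I(u)² (1/h(u) − 1/h(û))`. -/
theorem flow_harmonic_identity (T : LFRootedTree)
    (I : T.V → ℝ) (hI : T.IsUnitFlow I)
    (h : T.V → ℝ) (hpos : ∀ x, 0 < h x) (hle1 : ∀ x, h x ≤ 1)
    (hroot : h T.root = 1)
    (hmono : ∀ x, x ≠ T.root → h x ≤ h (T.parent x)) (n : ℕ) :
    ∑ x ∈ T.lev n, ∑ y ∈ T.lev n, I x * I y / h (T.mca x y)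
      = 1 + ∑ k ∈ Finset.Icc 1 n, ∑ u ∈ T.lev k,
          I u ^ 2 * (1 / h u - 1 / h (T.parent u)) :=
  flow_harmonic_identity_general T I hI h hroot n
end
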